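/- arXiv:1906.10061 — 2 statements merged into one kernel-verified Lean document; each statement's English description precedes it below -/
import Mathlib

section
/- For a rectangle R in ℝⁿ with side lengths ℓ₁,…,ℓₙ > 0, let N(R) be the number of n-tuples (m₁,…,mₙ) of nonnegative integers satisfying m₁²/ℓ₁² + ⋯ + mₙ²/ℓₙ² ≤ 1/ℓ₁² + ⋯ + 1/ℓₙ² (which equals the number of Neumann eigenvalues, counted with multiplicity, of the Laplacian on R that are at most the first Dirichlet eigenvalue); then (ωₙ/2ⁿ)·a₁⋯aₙ ≤ N(R) ≤ ωₙ·a₁⋯aₙ, where aᵢ = ℓᵢ·ρ with ρ² = Σ 1/ℓᵢ² and ωₙ is the volume of the unit ball in ℝⁿ. -/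
open MeasureTheory Real Finset
open scoped ENNReal

lemma aux_null_hyperplanes (n : ℕ) :
    (volume : Measure (Fin n → ℝ)) (⋃ i, {x | x i = 0}) = 0 := by
  refine measure_iUnion_null fun i => ?_
  rw [volume_pi]
  exact Measure.pi_hyperplane _ i 0

lemma aux_flip_mp (n : ℕ) (s : Fin n → Bool) :
    MeasurePreserving (fun (x : Fin n → ℝ) i => if s i then x i else -x i)
      volume volume := by
  have : ∀ i : Fin n, MeasurePreserving (fun t : ℝ => if s i then t else -t)
      volume volume := by
    intro i
    by_cases h : s i
    · convert MeasurePreserving.id (volume : Measure ℝ) using 1; funext t; simp [h]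
    · simpa [h] using Measure.measurePreserving_neg (volume : Measure ℝ)
  exact volume_preserving_pi this

lemma aux_orthant (n : ℕ) (S : Set (Fin n → ℝ)) (hS : MeasurableSet S)
    (hsym : ∀ (s : Fin n → Bool) (x : Fin n → ℝ), x ∈ S →
      (fun i => if s i then x i else -x i) ∈ S) :
    (2 : ℝ≥0∞) ^ n * volume (S ∩ {x | ∀ i, 0 ≤ x i}) = volume S := by
  classical
  set P : Set (Fin n → ℝ) := {x | ∀ i, 0 ≤ x i} with hP
  set O : (Fin n → Bool) → Set (Fin n → ℝ) :=
    fun s => {x | ∀ i, if s i then 0 ≤ x i else x i < 0} with hO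
  have hOmeas : ∀ s, MeasurableSet (O s) := by
    intro s
    have he : O s = ⋂ i, (fun x : Fin n → ℝ => x i) ⁻¹'
        (if s i then Set.Ici (0:ℝ) else Set.Iio 0) := by
      ext x; simp only [hO, Set.mem_setOf_eq, Set.mem_iInter, Set.mem_preimage]
      refine forall_congr' fun i => ?_
      by_cases h : s i <;> simp [h]
    rw [he]
    refine MeasurableSet.iInter fun i => (measurable_pi_apply i) ?_
    by_cases h : s i <;> simp [h, measurableSet_Ici, measurableSet_Iio]
  have hcover : (⋃ s, O s) = Set.univ := by
    ext x
    simp only [Set.mem_iUnion, Set.mem_univ, iff_true]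
    refine ⟨fun i => decide (0 ≤ x i), fun i => ?_⟩
    by_cases h : 0 ≤ x i <;> simp [h]
    exact not_le.mp h
  have hdisj : Pairwise (Function.onFun Disjoint fun s => S ∩ O s) := by
    intro s t hst
    have : ∃ i, s i ≠ t i := by
      by_contra hc
      push_neg at hc
      exact hst (funext hc)
    obtain ⟨i, hi⟩ := this
    refine Set.disjoint_left.mpr fun x hx hx' => ?_
    have h1 := hx.2 i
    have h2 := hx'.2 i
    cases hs : s i <;> cases ht : t i <;> rw [hs] at h1 <;> rw [ht] at h2 <;>
      simp_all <;> linarith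
  have hsplit : volume S = ∑ s : Fin n → Bool, volume (S ∩ O s) := by
    conv_lhs => rw [show S = ⋃ s, S ∩ O s by
      rw [← Set.inter_iUnion, hcover, Set.inter_univ]]
    rw [measure_iUnion hdisj fun s => hS.inter (hOmeas s), tsum_fintype]
  -- each piece has the same volume as S ∩ P
  have hpiece : ∀ s, volume (S ∩ O s) = volume (S ∩ P) := by
    intro s
    set g : (Fin n → ℝ) → (Fin n → ℝ) := fun x i => if s i then x i else -x i with hg
    have hmp := aux_flip_mp n s
    have hpre : volume (g ⁻¹' (S ∩ O s)) = volume (S ∩ O s) :=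
      hmp.measure_preimage ((hS.inter (hOmeas s)).nullMeasurableSet)
    have hgS : g ⁻¹' S = S := by
      ext x
      constructor
      · intro hx
        have := hsym s _ hx
        have hgg : (fun i => if s i then g x i else -g x i) = x := by
          funext i; by_cases h : s i <;> simp [hg, h]
        rwa [hgg] at this
      · intro hx
        exact hsym s x hx
    have hgO : g ⁻¹' (O s) = {x | ∀ i, if s i then 0 ≤ x i else 0 < x i} := by
      ext x
      simp only [hO, hg, Set.mem_preimage, Set.mem_setOf_eq]
      refine forall_congr' fun i => ?_
      by_cases h : s i <;> simp [h]
    have hae : ((S ∩ {x | ∀ i, if s i then 0 ≤ x i else 0 < x i} : Set (Fin n → ℝ)))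
        =ᵐ[(volume : Measure (Fin n → ℝ))] ((S ∩ P : Set (Fin n → ℝ))) := by
      rw [MeasureTheory.ae_eq_set]
      constructor
      · have hsub : (S ∩ {x | ∀ i, if s i then 0 ≤ x i else 0 < x i} : Set (Fin n → ℝ)) ⊆ S ∩ P := by
          refine Set.inter_subset_inter_right _ fun x hx i => ?_
          have := hx i
          by_cases h : s i
          · rwa [if_pos h] at this
          · rw [if_neg h] at this; exact le_of_lt this
        rw [Set.diff_eq_empty.mpr hsub]
        exact measure_empty
      · refine measure_mono_null ?_ (aux_null_hyperplanes n)
        intro x hx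
        obtain ⟨⟨hxS, hxP⟩, hxn⟩ := hx
        simp only [Set.mem_inter_iff, Set.mem_setOf_eq, not_and, not_forall] at hxn
        obtain ⟨i, hi⟩ := hxn hxS
        refine Set.mem_iUnion.mpr ⟨i, ?_⟩
        have := hxP i
        by_cases h : s i
        · rw [if_pos h] at hi; exact absurd this hi
        · rw [if_neg h] at hi
          simp only [Set.mem_setOf_eq]
          linarith [not_lt.mp hi]
    rw [← hpre, Set.preimage_inter, hgS, hgO, measure_congr hae]
  rw [hsplit]
  simp_rw [hpiece]
  rw [Finset.sum_const, Finset.card_univ]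
  simp [Fintype.card_fun, nsmul_eq_mul]


lemma aux_ball_vol (n : ℕ) (hn : 0 < n) :
    volume {x : Fin n → ℝ | ∑ i, (x i)^2 ≤ 1}
      = volume (Metric.ball (0 : EuclideanSpace ℝ (Fin n)) 1) := by
  haveI : Nonempty (Fin n) := ⟨⟨0, hn⟩⟩
  haveI : Nontrivial (EuclideanSpace ℝ (Fin n)) := inferInstance
  have hball : volume (Metric.ball (0 : EuclideanSpace ℝ (Fin n)) 1)
      = volume (Metric.closedBall (0 : EuclideanSpace ℝ (Fin n)) 1) := by
    refine le_antisymm (measure_mono Metric.ball_subset_closedBall) ?_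
    calc volume (Metric.closedBall (0 : EuclideanSpace ℝ (Fin n)) 1)
        = volume (Metric.ball (0 : EuclideanSpace ℝ (Fin n)) 1 ∪ Metric.sphere 0 1) := by
          rw [Metric.ball_union_sphere]
      _ ≤ volume (Metric.ball (0 : EuclideanSpace ℝ (Fin n)) 1) + volume (Metric.sphere (0 : EuclideanSpace ℝ (Fin n)) 1) :=
          measure_union_le _ _
      _ = volume (Metric.ball (0 : EuclideanSpace ℝ (Fin n)) 1) := by
          rw [Measure.addHaar_sphere volume (0 : EuclideanSpace ℝ (Fin n)) 1, add_zero]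
  rw [hball]
  have hmeas : MeasurableSet {x : Fin n → ℝ | ∑ i, (x i)^2 ≤ 1} :=
    measurableSet_le (by fun_prop) measurable_const
  rw [← (EuclideanSpace.volume_preserving_symm_measurableEquiv_toLp (Fin n)).measure_preimage
    hmeas.nullMeasurableSet]
  congr 1
  ext y
  simp only [Set.mem_preimage, Set.mem_setOf_eq, Metric.mem_closedBall, dist_zero_right,
    EuclideanSpace.norm_eq]
  have hy : ∀ i, (MeasurableEquiv.toLp 2 (Fin n → ℝ)).symm y i = y i := fun _ => rfl
  simp_rw [hy, Real.norm_eq_abs, sq_abs, Real.sqrt_le_iff]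
  constructor
  · intro h; exact ⟨zero_le_one, by simpa using h⟩
  · intro h; simpa using h.2

lemma aux_quarter (n : ℕ) (hn : 0 < n) (b : Fin n → ℝ) (hb : ∀ i, 0 < b i) :
    volume {x : Fin n → ℝ | (∀ i, 0 ≤ x i) ∧ ∑ i, (x i)^2 / (b i)^2 ≤ 1}
      = (∏ i, ENNReal.ofReal (b i)) *
          volume (Metric.ball (0 : EuclideanSpace ℝ (Fin n)) 1) / 2 ^ n := by
  classical
  set B : Set (Fin n → ℝ) := {x | ∑ i, (x i)^2 ≤ 1} with hB
  set P : Set (Fin n → ℝ) := {x | ∀ i, 0 ≤ x i} with hP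
  set Eb : Set (Fin n → ℝ) := {x | ∑ i, (x i)^2 / (b i)^2 ≤ 1} with hEb
  have hPmeas : MeasurableSet P := by
    have : P = ⋂ i, (fun x : Fin n → ℝ => x i) ⁻¹' Set.Ici (0:ℝ) := by
      ext x; simp [hP]
    rw [this]
    exact MeasurableSet.iInter fun i => (measurable_pi_apply i) measurableSet_Ici
  have hBmeas : MeasurableSet B := measurableSet_le (by fun_prop) measurable_const
  have hEbmeas : MeasurableSet Eb := measurableSet_le (by fun_prop) measurable_const
  have hbne : ∀ i, (b i : ℝ) ≠ 0 := fun i => (hb i).ne'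
  -- step 1 : preimage under diagonal map
  set L := Matrix.toLin' (Matrix.diagonal b) with hL
  have hLapp : ∀ (x : Fin n → ℝ) i, L x i = b i * x i := by
    intro x i; simp [hL, Matrix.toLin'_apply, Matrix.mulVec_diagonal]
  have hdet : LinearMap.det L = ∏ i, b i := by
    rw [hL, LinearMap.det_toLin', Matrix.det_diagonal]
  have hprodpos : 0 < ∏ i, b i := Finset.prod_pos fun i _ => hb i
  have hpre : L ⁻¹' (Eb ∩ P) = B ∩ P := by
    ext x
    simp only [Set.mem_preimage, Set.mem_inter_iff, hEb, hB, hP, Set.mem_setOf_eq]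
    have h1 : ∑ i, (L x i)^2 / (b i)^2 = ∑ i, (x i)^2 := by
      refine Finset.sum_congr rfl fun i _ => ?_
      rw [hLapp, mul_pow, mul_comm, mul_div_assoc, div_self (pow_ne_zero 2 (hbne i)), mul_one]
    have h2 : (∀ i, 0 ≤ L x i) ↔ ∀ i, 0 ≤ x i := by
      refine forall_congr' fun i => ?_
      rw [hLapp]
      exact ⟨fun h => nonneg_of_mul_nonneg_right h (hb i), fun h => mul_nonneg (hb i).le h⟩
    rw [h1, h2]
  have hvolpre : volume (B ∩ P) = ENNReal.ofReal ((∏ i, b i)⁻¹) * volume (Eb ∩ P) := by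
    have := Measure.addHaar_preimage_linearMap volume
      (f := L) (by rw [hdet]; exact hprodpos.ne') (Eb ∩ P)
    rw [hpre] at this
    rw [this, hdet, abs_of_pos (by positivity)]
  -- step 2 : orthant symmetry of B
  have horth : (2 : ℝ≥0∞) ^ n * volume (B ∩ P) = volume B := by
    refine aux_orthant n B hBmeas fun s x hx => ?_
    simp only [hB, Set.mem_setOf_eq] at hx ⊢
    have : ∀ i, (if s i then x i else -x i)^2 = (x i)^2 := by
      intro i; by_cases h : s i <;> simp [h]
    simpa [this] using hx
  -- combine
  have hEbP : volume (Eb ∩ P) = ENNReal.ofReal (∏ i, b i) * volume (B ∩ P) := by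
    rw [hvolpre, ← mul_assoc, ← ENNReal.ofReal_mul hprodpos.le,
      mul_inv_cancel₀ hprodpos.ne', ENNReal.ofReal_one, one_mul]
  have hBP : volume (B ∩ P) = volume B / 2 ^ n :=
    (ENNReal.eq_div_iff (pow_ne_zero _ two_ne_zero)
      (ENNReal.pow_ne_top ENNReal.ofNat_ne_top)).mpr horth
  have hofprod : ENNReal.ofReal (∏ i, b i) = ∏ i, ENNReal.ofReal (b i) := by
    rw [← ENNReal.ofReal_prod_of_nonneg fun i _ => (hb i).le]
  have : {x : Fin n → ℝ | (∀ i, 0 ≤ x i) ∧ ∑ i, (x i)^2 / (b i)^2 ≤ 1} = Eb ∩ P := by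
    ext x; simp only [hEb, hP, Set.mem_inter_iff, Set.mem_setOf_eq]; tauto
  rw [this, hEbP, hBP, aux_ball_vol n hn, hofprod, mul_div_assoc]

/-- For a rectangle with side lengths ℓᵢ > 0, the lattice-point count
N(R) = #{m ∈ ℕ₀ⁿ : Σ mᵢ²/ℓᵢ² ≤ Σ 1/ℓᵢ²} satisfies
(ωₙ/2ⁿ)·a₁⋯aₙ ≤ N(R) ≤ ωₙ·a₁⋯aₙ, where aᵢ = ℓᵢρ, ρ² = Σ ℓᵢ⁻². -/
theorem rectangle_count_bounds (n : ℕ) (ℓ : Fin n → ℝ) (hℓ : ∀ i, 0 < ℓ i)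
    (ρ : ℝ) (hρ : ρ = Real.sqrt (∑ i, (ℓ i)⁻¹ ^ 2))
    (a : Fin n → ℝ) (ha : ∀ i, a i = ℓ i * ρ)
    (ω : ℝ) (hω : ω = (volume (Metric.ball (0 : EuclideanSpace ℝ (Fin n)) 1)).toReal)
    (N : ℕ)
    (hN : N = Set.ncard {m : Fin n → ℕ |
      ∑ i, (m i : ℝ) ^ 2 / ℓ i ^ 2 ≤ ∑ i, 1 / ℓ i ^ 2}) :
    ω / 2 ^ n * ∏ i, a i ≤ (N : ℝ) ∧ (N : ℝ) ≤ ω * ∏ i, a i := by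
  rcases Nat.eq_zero_or_pos n with hn | hn
  · subst hn
    have hA : {m : Fin 0 → ℕ |
        ∑ i, (m i : ℝ) ^ 2 / ℓ i ^ 2 ≤ ∑ i, 1 / ℓ i ^ 2} = Set.univ := by
      ext m; simp
    have hN1 : N = 1 := by
      rw [hN, hA, Set.ncard_univ, Nat.card_eq_one_iff_unique]
      exact ⟨⟨fun f g => funext fun i => i.elim0⟩, ⟨fun i => i.elim0⟩⟩
    have hball : (Metric.ball (0 : EuclideanSpace ℝ (Fin 0)) 1) = Set.univ := by
      ext y
      simp only [Metric.mem_ball, Set.mem_univ, iff_true]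
      have : dist y 0 = 0 := by
        rw [EuclideanSpace.dist_eq]
        simp
      rw [this]; norm_num
    have hω1 : ω = 1 := by
      rw [hω, hball, volume_euclideanSpace_eq_dirac]
      simp
    rw [hN1, hω1]
    norm_num
  · haveI : Nonempty (Fin n) := ⟨⟨0, hn⟩⟩
    have hρ2 : ρ ^ 2 = ∑ i, 1 / ℓ i ^ 2 := by
      rw [hρ, Real.sq_sqrt (by positivity)]
      exact Finset.sum_congr rfl fun i _ => by rw [inv_pow, one_div]
    have hρpos : 0 < ρ := by
      rw [hρ]
      apply Real.sqrt_pos.mpr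
      exact Finset.sum_pos (fun i _ => by have := (hℓ i).ne'; positivity)
        Finset.univ_nonempty
    have hapos : ∀ i, 0 < a i := fun i => by rw [ha]; exact mul_pos (hℓ i) hρpos
    set A := {m : Fin n → ℕ |
      ∑ i, (m i : ℝ) ^ 2 / ℓ i ^ 2 ≤ ∑ i, 1 / ℓ i ^ 2} with hAdef
    have hmemA : ∀ m : Fin n → ℕ,
        m ∈ A ↔ ∑ i, (m i : ℝ) ^ 2 / ℓ i ^ 2 ≤ ρ ^ 2 := by
      intro m; rw [hρ2]; exact Iff.rfl
    have hAfin : A.Finite := by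
      apply Set.Finite.subset
        (Set.Finite.pi fun i : Fin n => Set.finite_Iic (⌊a i⌋₊))
      intro m hm
      simp only [Set.mem_pi, Set.mem_univ, forall_true_left, Set.mem_Iic]
      intro i
      have hterm : (m i : ℝ) ^ 2 / ℓ i ^ 2 ≤ ρ ^ 2 := by
        refine le_trans (Finset.single_le_sum (f := fun j => (m j : ℝ) ^ 2 / ℓ j ^ 2)
          (fun j _ => by positivity) (Finset.mem_univ i)) ?_
        exact (hmemA m).mp hm
      have hsq : (m i : ℝ) ^ 2 ≤ (a i) ^ 2 := by
        rw [ha, mul_pow]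
        rw [div_le_iff₀ (pow_pos (hℓ i) 2)] at hterm
        linarith [hterm]
      have hle : (m i : ℝ) ≤ a i := by
        nlinarith [show (0:ℝ) ≤ (m i : ℝ) from Nat.cast_nonneg _, hapos i]
      exact Nat.le_floor hle
    set F := hAfin.toFinset with hF
    have hNcard : N = F.card := by
      rw [hN, Set.ncard_eq_toFinset_card _ hAfin]
    set C : (Fin n → ℕ) → Set (Fin n → ℝ) :=
      fun m => Set.pi Set.univ fun i => Set.Ico (m i : ℝ) ((m i : ℝ) + 1) with hC
    have hCmeas : ∀ m, MeasurableSet (C m) :=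
      fun m => MeasurableSet.univ_pi fun i => measurableSet_Ico
    have hCvol : ∀ m, volume (C m) = 1 := by
      intro m
      rw [hC, volume_pi_pi]
      simp [Real.volume_Ico]
    have hsum_eq : ∀ x : Fin n → ℝ,
        ∑ i, (x i) ^ 2 / (a i) ^ 2 = (∑ i, (x i) ^ 2 / (ℓ i) ^ 2) / ρ ^ 2 := by
      intro x
      rw [Finset.sum_div]
      exact Finset.sum_congr rfl fun i _ => by rw [ha, mul_pow, div_div]
    have hsum_eq2 : ∀ x : Fin n → ℝ,
        ∑ i, (x i) ^ 2 / (2 * a i) ^ 2 = (∑ i, (x i) ^ 2 / (ℓ i) ^ 2) / (4 * ρ ^ 2) := by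
      intro x
      rw [Finset.sum_div]
      refine Finset.sum_congr rfl fun i _ => ?_
      have h4 : (2 * a i) ^ 2 = ℓ i ^ 2 * (4 * ρ ^ 2) := by rw [ha]; ring
      rw [h4, div_div]
    -- lower bound
    have hlow_incl : {x : Fin n → ℝ | (∀ i, 0 ≤ x i) ∧ ∑ i, (x i) ^ 2 / (a i) ^ 2 ≤ 1}
        ⊆ ⋃ m ∈ F, C m := by
      rintro x ⟨hxP, hxE⟩
      set m : Fin n → ℕ := fun i => ⌊x i⌋₊ with hm
      have hsum_x : ∑ i, (x i) ^ 2 / (ℓ i) ^ 2 ≤ ρ ^ 2 := by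
        rw [hsum_eq, div_le_one (by positivity)] at hxE
        exact hxE
      have hmA : m ∈ A := by
        rw [hmemA]
        refine le_trans ?_ hsum_x
        gcongr with i hi
        exact Nat.floor_le (hxP i)
      refine Set.mem_biUnion (hAfin.mem_toFinset.mpr hmA) ?_
      rw [hC, Set.mem_univ_pi]
      intro i
      exact ⟨Nat.floor_le (hxP i), Nat.lt_floor_add_one _⟩
    have hlower : volume {x : Fin n → ℝ |
        (∀ i, 0 ≤ x i) ∧ ∑ i, (x i) ^ 2 / (a i) ^ 2 ≤ 1} ≤ (N : ℝ≥0∞) := by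
      calc volume {x : Fin n → ℝ | (∀ i, 0 ≤ x i) ∧ ∑ i, (x i) ^ 2 / (a i) ^ 2 ≤ 1}
          ≤ volume (⋃ m ∈ F, C m) := measure_mono hlow_incl
        _ ≤ ∑ m ∈ F, volume (C m) := measure_biUnion_finset_le F C
        _ = F.card := by simp [hCvol]
        _ = (N : ℝ≥0∞) := by rw [hNcard]
    -- upper bound
    have hdisjC : (↑F : Set (Fin n → ℕ)).PairwiseDisjoint C := by
      intro m₁ h₁ m₂ h₂ hne
      refine Set.disjoint_left.mpr fun x hx1 hx2 => hne ?_
      funext i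
      rw [hC, Set.mem_univ_pi] at hx1 hx2
      obtain ⟨l1, r1⟩ := hx1 i
      obtain ⟨l2, r2⟩ := hx2 i
      have c1 : (m₁ i : ℝ) < (m₂ i : ℝ) + 1 := lt_of_le_of_lt l1 r2
      have c2 : (m₂ i : ℝ) < (m₁ i : ℝ) + 1 := lt_of_le_of_lt l2 r1
      have d1 : m₁ i < m₂ i + 1 := by exact_mod_cast c1
      have d2 : m₂ i < m₁ i + 1 := by exact_mod_cast c2
      omega
    have hupper_incl : (⋃ m ∈ F, C m) ⊆
        {x : Fin n → ℝ | (∀ i, 0 ≤ x i) ∧ ∑ i, (x i) ^ 2 / (2 * a i) ^ 2 ≤ 1} := by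
      intro x hx
      obtain ⟨m, hmF, hxC⟩ := Set.mem_iUnion₂.mp hx
      have hmA : m ∈ A := hAfin.mem_toFinset.mp hmF
      rw [hC, Set.mem_univ_pi] at hxC
      have hxP : ∀ i, 0 ≤ x i := fun i =>
        le_trans (Nat.cast_nonneg _) (hxC i).1
      refine ⟨hxP, ?_⟩
      have key : ∑ i, (x i) ^ 2 / (ℓ i) ^ 2 ≤ 4 * ρ ^ 2 := by
        have hmsum : ∑ i, (m i : ℝ) ^ 2 / ℓ i ^ 2 ≤ ρ ^ 2 := (hmemA m).mp hmA
        have h1 : ∀ i, (x i) ^ 2 ≤ 2 * (m i : ℝ) ^ 2 + 2 := by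
          intro i
          have hx0 : 0 ≤ x i := le_trans (Nat.cast_nonneg _) (hxC i).1
          have hx2 : x i ^ 2 ≤ ((m i : ℝ) + 1) ^ 2 :=
            pow_le_pow_left₀ hx0 (hxC i).2.le 2
          nlinarith [sq_nonneg ((m i : ℝ) - 1)]
        calc ∑ i, (x i) ^ 2 / ℓ i ^ 2
            ≤ ∑ i, (2 * (m i : ℝ) ^ 2 + 2) / ℓ i ^ 2 := by
              gcongr with i hi
              exact h1 i
          _ = 2 * ∑ i, (m i : ℝ) ^ 2 / ℓ i ^ 2 + 2 * ∑ i, 1 / ℓ i ^ 2 := by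
              rw [Finset.mul_sum, Finset.mul_sum, ← Finset.sum_add_distrib]
              refine Finset.sum_congr rfl fun i _ => ?_
              field_simp
          _ ≤ 2 * ρ ^ 2 + 2 * ρ ^ 2 := by rw [← hρ2]; linarith
          _ = 4 * ρ ^ 2 := by ring
      rw [hsum_eq2, div_le_one (by positivity)]
      exact key
    have hupper : (N : ℝ≥0∞) ≤ volume {x : Fin n → ℝ |
        (∀ i, 0 ≤ x i) ∧ ∑ i, (x i) ^ 2 / (2 * a i) ^ 2 ≤ 1} := by
      calc (N : ℝ≥0∞) = ∑ m ∈ F, volume (C m) := by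
            simp [hCvol, hNcard]
        _ = volume (⋃ m ∈ F, C m) :=
            (measure_biUnion_finset hdisjC fun m _ => hCmeas m).symm
        _ ≤ _ := measure_mono hupper_incl
    -- volumes via aux_quarter
    set ωE := volume (Metric.ball (0 : EuclideanSpace ℝ (Fin n)) 1) with hωE
    have hQ1 := aux_quarter n hn a hapos
    have hb2 : ∀ i, 0 < 2 * a i := fun i => by linarith [hapos i]
    have hQ2 := aux_quarter n hn (fun i => 2 * a i) hb2
    have hωfin : ωE ≠ ⊤ := measure_ball_lt_top.ne
    have hprodfin : (∏ i, ENNReal.ofReal (a i)) ≠ ⊤ :=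
      (ENNReal.prod_lt_top fun i _ => ENNReal.ofReal_lt_top).ne
    have hprodfin2 : (∏ i, ENNReal.ofReal (2 * a i)) ≠ ⊤ :=
      (ENNReal.prod_lt_top fun i _ => ENNReal.ofReal_lt_top).ne
    have htwopow : ((2 : ℝ≥0∞) ^ n) ≠ 0 := pow_ne_zero _ two_ne_zero
    have hQ1fin : volume {x : Fin n → ℝ |
        (∀ i, 0 ≤ x i) ∧ ∑ i, (x i) ^ 2 / (a i) ^ 2 ≤ 1} ≠ ⊤ := by
      rw [hQ1]
      exact (ENNReal.div_lt_top (ENNReal.mul_ne_top hprodfin hωfin) htwopow).ne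
    have hQ2fin : volume {x : Fin n → ℝ |
        (∀ i, 0 ≤ x i) ∧ ∑ i, (x i) ^ 2 / (2 * a i) ^ 2 ≤ 1} ≠ ⊤ := by
      rw [hQ2]
      exact (ENNReal.div_lt_top (ENNReal.mul_ne_top hprodfin2 hωfin) htwopow).ne
    -- toReal computations
    have htr1 : (volume {x : Fin n → ℝ |
        (∀ i, 0 ≤ x i) ∧ ∑ i, (x i) ^ 2 / (a i) ^ 2 ≤ 1}).toReal
        = (∏ i, a i) * ω / 2 ^ n := by
      rw [hQ1, ENNReal.toReal_div, ENNReal.toReal_mul, ENNReal.toReal_prod,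
        ENNReal.toReal_pow, hω]
      simp only [ENNReal.toReal_ofReal (hapos _).le, ENNReal.toReal_ofNat]
      rfl
    have htr2 : (volume {x : Fin n → ℝ |
        (∀ i, 0 ≤ x i) ∧ ∑ i, (x i) ^ 2 / (2 * a i) ^ 2 ≤ 1}).toReal
        = (∏ i, (2 * a i)) * ω / 2 ^ n := by
      rw [hQ2, ENNReal.toReal_div, ENNReal.toReal_mul, ENNReal.toReal_prod,
        ENNReal.toReal_pow, hω]
      simp only [ENNReal.toReal_ofReal (hb2 _).le, ENNReal.toReal_ofNat]
      rfl
    constructor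
    · have h := ENNReal.toReal_mono (ENNReal.natCast_ne_top N) hlower
      rw [htr1, ENNReal.toReal_natCast N] at h
      calc ω / 2 ^ n * ∏ i, a i = (∏ i, a i) * ω / 2 ^ n := by ring
        _ ≤ N := h
    · have h := ENNReal.toReal_mono hQ2fin hupper
      rw [htr2, ENNReal.toReal_natCast N] at h
      have hprod2 : (∏ i, (2 * a i)) = 2 ^ n * ∏ i, a i := by
        rw [Finset.prod_mul_distrib, Finset.prod_const, Finset.card_univ,
          Fintype.card_fin]
      calc (N : ℝ) ≤ (∏ i, (2 * a i)) * ω / 2 ^ n := h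
        _ = ω * ∏ i, a i := by
            rw [hprod2]
            field_simp
end

section
/- There exist positive constants c₁(n) and c₂(n), depending only on n, such that for every rectangle R ⊂ ℝⁿ with side lengths ℓ₁,…,ℓₙ > 0, the count N(R) = #{m ∈ ℕ₀ⁿ : Σᵢ mᵢ²/ℓᵢ² ≤ Σᵢ 1/ℓᵢ²} satisfies c₁·|∂R|ⁿ/|R|^{n−1} ≤ N(R) ≤ c₂·|∂R|ⁿ/|R|^{n−1}. -/
/-!
Write `T = ∑ᵢ 1/ℓᵢ`. Since `∏ⱼ≠ᵢ ℓⱼ = |R|/ℓᵢ`, the ratio `|∂R|ⁿ/|R|ⁿ⁻¹` equals `∏ᵢ 2Tℓᵢ`.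
The counted lattice points lie in the ellipsoid `∑ mᵢ²/ℓᵢ² ≤ ∑ 1/ℓᵢ²`, which is squeezed between
two boxes: it is contained in `{mᵢ ≤ Tℓᵢ}` because `∑ 1/ℓᵢ² ≤ T²`, and it contains
`{mᵢ ≤ Tℓᵢ/n}` because `T² ≤ n ∑ 1/ℓᵢ²` (Cauchy–Schwarz). Counting lattice points in these boxes
gives `∏ᵢ Tℓᵢ/n ≤ N(R) ≤ ∏ᵢ (Tℓᵢ + 1) ≤ ∏ᵢ 2Tℓᵢ`, the last step because `Tℓᵢ ≥ 1`.
-/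

open Finset

namespace RectangleLatticeCount

variable {ι : Type*} [Fintype ι]

def latticeEllipsoid (ℓ : ι → ℝ) : Set (ι → ℕ) :=
  {m | ∑ i, (m i : ℝ) ^ 2 / ℓ i ^ 2 ≤ ∑ i, 1 / ℓ i ^ 2}

variable {ℓ : ι → ℝ}

lemma sum_one_div_nonneg (hℓ : ∀ i, 0 < ℓ i) : 0 ≤ ∑ i, 1 / ℓ i :=
  sum_nonneg fun i _ => (one_div_pos.2 (hℓ i)).le

lemma sum_one_div_sq_le_sq_sum_one_div (hℓ : ∀ i, 0 < ℓ i) :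
    ∑ i, 1 / ℓ i ^ 2 ≤ (∑ i, 1 / ℓ i) ^ 2 := by
  simpa only [one_div, inv_pow] using
    sum_sq_le_sq_sum_of_nonneg (s := univ) fun i _ => (inv_pos.2 (hℓ i)).le

lemma sq_sum_one_div_le_card_mul (ℓ : ι → ℝ) :
    (∑ i, 1 / ℓ i) ^ 2 ≤ Fintype.card ι * ∑ i, 1 / ℓ i ^ 2 := by
  simpa only [one_div, inv_pow, card_univ] using
    sq_sum_le_card_mul_sum_sq (s := univ) (f := fun i => (ℓ i)⁻¹)

lemma one_le_sum_one_div_mul (hℓ : ∀ i, 0 < ℓ i) (i : ι) : 1 ≤ (∑ j, 1 / ℓ j) * ℓ i := by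
  have h : 1 / ℓ i ≤ ∑ j, 1 / ℓ j :=
    single_le_sum (f := fun j => 1 / ℓ j) (fun j _ => (one_div_pos.2 (hℓ j)).le) (mem_univ i)
  rwa [div_le_iff₀ (hℓ i)] at h

variable [DecidableEq ι]

noncomputable def natBox (a : ι → ℝ) : Finset (ι → ℕ) :=
  Fintype.piFinset fun i => range (⌊a i⌋₊ + 1)

lemma mem_natBox {a : ι → ℝ} (ha : ∀ i, 0 ≤ a i) {m : ι → ℕ} :
    m ∈ natBox a ↔ ∀ i, (m i : ℝ) ≤ a i := by
  simp only [natBox, Fintype.mem_piFinset, mem_range, Nat.lt_succ_iff, Nat.le_floor_iff (ha _)]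

lemma card_natBox (a : ι → ℝ) : ((natBox a).card : ℝ) = ∏ i, ((⌊a i⌋₊ : ℝ) + 1) := by
  simp [natBox]

lemma prod_le_card_natBox {a : ι → ℝ} (ha : ∀ i, 0 ≤ a i) :
    ∏ i, a i ≤ (natBox a).card := by
  rw [card_natBox]
  exact prod_le_prod (fun i _ => ha i) fun i _ => (Nat.lt_floor_add_one _).le

lemma card_natBox_le {a : ι → ℝ} (ha : ∀ i, 0 ≤ a i) :
    ((natBox a).card : ℝ) ≤ ∏ i, (a i + 1) := by
  rw [card_natBox]
  exact prod_le_prod (fun i _ => by positivity) fun i _ => by gcongr; exact Nat.floor_le (ha i)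

lemma latticeEllipsoid_subset_natBox (hℓ : ∀ i, 0 < ℓ i) :
    latticeEllipsoid ℓ ⊆ natBox fun i => (∑ j, 1 / ℓ j) * ℓ i := by
  intro m hm
  have hT : 0 ≤ ∑ j, 1 / ℓ j := sum_one_div_nonneg hℓ
  rw [mem_coe, mem_natBox fun i => mul_nonneg hT (hℓ i).le]
  intro i
  have hmi : ((m i : ℝ) / ℓ i) ^ 2 ≤ (∑ j, 1 / ℓ j) ^ 2 := calc
    ((m i : ℝ) / ℓ i) ^ 2 = (m i : ℝ) ^ 2 / ℓ i ^ 2 := div_pow _ _ _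
    _ ≤ ∑ j, (m j : ℝ) ^ 2 / ℓ j ^ 2 :=
      single_le_sum (f := fun j => (m j : ℝ) ^ 2 / ℓ j ^ 2) (fun j _ => by positivity) (mem_univ i)
    _ ≤ ∑ j, 1 / ℓ j ^ 2 := hm
    _ ≤ (∑ j, 1 / ℓ j) ^ 2 := sum_one_div_sq_le_sq_sum_one_div hℓ
  rw [← div_le_iff₀ (hℓ i)]
  exact (pow_le_pow_iff_left₀ (by have := hℓ i; positivity) hT two_ne_zero).1 hmi

lemma natBox_subset_latticeEllipsoid (hℓ : ∀ i, 0 < ℓ i) :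
    ↑(natBox fun i => (∑ j, 1 / ℓ j) * ℓ i / Fintype.card ι) ⊆ latticeEllipsoid ℓ := by
  intro m hm
  set T := ∑ j, 1 / ℓ j
  rw [mem_coe, mem_natBox fun i =>
    div_nonneg (mul_nonneg (sum_one_div_nonneg hℓ) (hℓ i).le) (Nat.cast_nonneg _)] at hm
  have hmi : ∀ i, (m i : ℝ) ^ 2 / ℓ i ^ 2 ≤ (T / Fintype.card ι) ^ 2 := fun i => by
    rw [← div_pow]
    refine pow_le_pow_left₀ (div_nonneg (Nat.cast_nonneg _) (hℓ i).le) ?_ 2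
    rw [div_le_iff₀ (hℓ i), div_mul_eq_mul_div]
    exact hm i
  calc ∑ i, (m i : ℝ) ^ 2 / ℓ i ^ 2 ≤ ∑ _i : ι, (T / Fintype.card ι) ^ 2 :=
        sum_le_sum fun i _ => hmi i
    _ = T ^ 2 / Fintype.card ι := by
      rw [sum_const, card_univ, nsmul_eq_mul]
      rcases eq_or_ne (Fintype.card ι : ℝ) 0 with hn | hn
      · simp [hn]
      · field_simp
    _ ≤ ∑ i, 1 / ℓ i ^ 2 :=
      div_le_of_le_mul₀ (Nat.cast_nonneg _) (sum_nonneg fun i _ => by positivity)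
        (by rw [mul_comm]; exact sq_sum_one_div_le_card_mul ℓ)

lemma prod_le_ncard_latticeEllipsoid (hℓ : ∀ i, 0 < ℓ i) :
    ∏ i, (∑ j, 1 / ℓ j) * ℓ i / Fintype.card ι ≤ (latticeEllipsoid ℓ).ncard := by
  have hfin : (latticeEllipsoid ℓ).Finite :=
    (finite_toSet _).subset (latticeEllipsoid_subset_natBox hℓ)
  calc ∏ i, (∑ j, 1 / ℓ j) * ℓ i / Fintype.card ι
      ≤ (natBox fun i => (∑ j, 1 / ℓ j) * ℓ i / Fintype.card ι).card :=
        prod_le_card_natBox fun i =>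
          div_nonneg (mul_nonneg (sum_one_div_nonneg hℓ) (hℓ i).le) (Nat.cast_nonneg _)
    _ ≤ (latticeEllipsoid ℓ).ncard := by
      rw [← Set.ncard_coe_finset]
      exact_mod_cast Set.ncard_le_ncard (natBox_subset_latticeEllipsoid hℓ) hfin

lemma ncard_latticeEllipsoid_le (hℓ : ∀ i, 0 < ℓ i) :
    ((latticeEllipsoid ℓ).ncard : ℝ) ≤ ∏ i, 2 * ((∑ j, 1 / ℓ j) * ℓ i) := by
  have hT : 0 ≤ ∑ j, 1 / ℓ j := sum_one_div_nonneg hℓ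
  calc ((latticeEllipsoid ℓ).ncard : ℝ)
      ≤ (natBox fun i => (∑ j, 1 / ℓ j) * ℓ i).card := by
        rw [← Set.ncard_coe_finset]
        exact_mod_cast Set.ncard_le_ncard (latticeEllipsoid_subset_natBox hℓ) (finite_toSet _)
    _ ≤ ∏ i, ((∑ j, 1 / ℓ j) * ℓ i + 1) := card_natBox_le fun i => mul_nonneg hT (hℓ i).le
    _ ≤ ∏ i, 2 * ((∑ j, 1 / ℓ j) * ℓ i) :=
      prod_le_prod (fun i _ => by have := mul_nonneg hT (hℓ i).le; positivity) fun i _ => by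
        linarith [one_le_sum_one_div_mul hℓ i]

lemma sum_prod_erase_eq_prod_mul_sum_one_div {K : Type*} [Field K] {ℓ : ι → K}
    (hℓ : ∀ i, ℓ i ≠ 0) : ∑ i, ∏ j ∈ univ.erase i, ℓ j = (∏ i, ℓ i) * ∑ i, 1 / ℓ i := by
  rw [mul_sum]
  refine sum_congr rfl fun i _ => ?_
  rw [← mul_prod_erase univ ℓ (mem_univ i)]
  field_simp [hℓ i]

lemma surface_pow_div_volume_pow_eq_prod (hℓ : ∀ i, 0 < ℓ i) :
    (2 * ∑ i, ∏ j ∈ univ.erase i, ℓ j) ^ Fintype.card ι / (∏ i, ℓ i) ^ (Fintype.card ι - 1)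
      = ∏ i, 2 * ((∑ j, 1 / ℓ j) * ℓ i) := by
  rw [sum_prod_erase_eq_prod_mul_sum_one_div fun i => (hℓ i).ne', prod_mul_distrib,
    prod_mul_distrib, prod_const, prod_const, card_univ]
  have hP : (∏ i, ℓ i) ≠ 0 := (prod_pos fun i _ => hℓ i).ne'
  rcases Nat.eq_zero_or_pos (Fintype.card ι) with h | h
  · have := Fintype.card_eq_zero_iff.1 h
    simp
  · obtain ⟨k, hk⟩ := Nat.exists_eq_add_of_lt h
    rw [hk, Nat.add_sub_cancel, zero_add, pow_succ]
    field_simp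
    ring

end RectangleLatticeCount

open RectangleLatticeCount in
theorem rectangle_isoperimetric_bounds_general (n : ℕ) :
    ∃ c₁ c₂ : ℝ, 0 < c₁ ∧ 0 < c₂ ∧
      ∀ ℓ : Fin n → ℝ, (∀ i, 0 < ℓ i) →
        ∀ N : ℕ, N = Set.ncard {m : Fin n → ℕ |
            ∑ i, (m i : ℝ) ^ 2 / ℓ i ^ 2 ≤ ∑ i, 1 / ℓ i ^ 2} →
          c₁ * (2 * ∑ i, ∏ j ∈ Finset.univ.erase i, ℓ j) ^ n / (∏ i, ℓ i) ^ (n - 1)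
              ≤ (N : ℝ) ∧
          (N : ℝ) ≤
            c₂ * (2 * ∑ i, ∏ j ∈ Finset.univ.erase i, ℓ j) ^ n / (∏ i, ℓ i) ^ (n - 1) := by
  have hc₁ : 0 < (1 / (2 * n : ℝ)) ^ n := by
    rcases Nat.eq_zero_or_pos n with rfl | hn
    · simp
    · positivity
  refine ⟨(1 / (2 * n)) ^ n, 1, hc₁, one_pos, fun ℓ hℓ N hN => ?_⟩
  have hratio := surface_pow_div_volume_pow_eq_prod hℓ
  have hlower := prod_le_ncard_latticeEllipsoid hℓ
  have hc₁_mul : (1 / (2 * n : ℝ)) ^ n * ∏ i, 2 * ((∑ j, 1 / ℓ j) * ℓ i)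
      = ∏ i, (∑ j, 1 / ℓ j) * ℓ i / n := by
    rw [show (1 / (2 * n : ℝ)) ^ n = ∏ _i : Fin n, 1 / (2 * n : ℝ) by simp, ← prod_mul_distrib]
    exact prod_congr rfl fun i _ => by ring
  rw [Fintype.card_fin] at hratio hlower
  rw [mul_div_assoc, mul_div_assoc, hratio, hN, hc₁_mul, one_mul]
  exact ⟨hlower, ncard_latticeEllipsoid_le hℓ⟩

/-- There exist constants c₁(n), c₂(n) > 0 such that for every rectangle R ⊂ ℝⁿ,
c₁·|∂R|ⁿ/|R|^{n−1} ≤ N(R) ≤ c₂·|∂R|ⁿ/|R|^{n−1}, where N(R) counts nonnegative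
lattice points m with Σ mᵢ²/ℓᵢ² ≤ Σ 1/ℓᵢ². -/
theorem rectangle_isoperimetric_bounds (n : ℕ) (hn : 0 < n) :
    ∃ c₁ c₂ : ℝ, 0 < c₁ ∧ 0 < c₂ ∧
      ∀ ℓ : Fin n → ℝ, (∀ i, 0 < ℓ i) →
        ∀ N : ℕ, N = Set.ncard {m : Fin n → ℕ |
            ∑ i, (m i : ℝ) ^ 2 / ℓ i ^ 2 ≤ ∑ i, 1 / ℓ i ^ 2} →
          c₁ * (2 * ∑ i, ∏ j ∈ Finset.univ.erase i, ℓ j) ^ n / (∏ i, ℓ i) ^ (n - 1)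
              ≤ (N : ℝ) ∧
          (N : ℝ) ≤
            c₂ * (2 * ∑ i, ∏ j ∈ Finset.univ.erase i, ℓ j) ^ n / (∏ i, ℓ i) ^ (n - 1) :=
  rectangle_isoperimetric_bounds_general n
end
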